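/- Let p(z,w) = z^m − w^n and J = 𝕋. If m divides n, then for U = {z ∈ 𝕋 : z^m ≠ 1} and every natural number k, the point 1 does not belong to U^{(k)}; hence p is not expansive on 𝕋. -/

import Mathlib

/-- `U^{(k)}`: endpoints of length-`k` paths of the correspondence `z^m = w^n`
on the unit circle starting in `U`. -/
def pathEndT (m n k : ℕ) (U : Set ℂ) : Set ℂ :=
  {w | ∃ z : Fin (k + 1) → ℂ, (∀ i, ‖z i‖ = 1) ∧
    (∀ i : Fin k, z i.castSucc ^ m = z i.succ ^ n) ∧ z 0 ∈ U ∧ z (Fin.last k) = w}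

lemma back_induct (m n : ℕ) (hdvd : m ∣ n) :
    ∀ k : ℕ, ∀ z : Fin (k + 1) → ℂ,
      (∀ i : Fin k, z i.castSucc ^ m = z i.succ ^ n) →
      z (Fin.last k) ^ m = 1 → z 0 ^ m = 1 := by
  obtain ⟨c, hc⟩ := hdvd
  intro k
  induction k with
  | zero => intro z _ h; simpa using h
  | succ k ih =>
    intro z hrel hlast
    have hstep : z ((Fin.last k).castSucc) ^ m = 1 := by
      have := hrel (Fin.last k)
      rw [Fin.succ_last] at this
      rw [this, hc, pow_mul, hlast, one_pow]
    have := ih (fun i => z i.castSucc)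
      (fun i => by
        have := hrel i.castSucc
        rwa [Fin.succ_castSucc] at this) hstep
    simpa using this

/-- if `m ∣ n`, then for `U = {z ∈ 𝕋 : z^m ≠ 1}` the point `1`
never belongs to `U^{(k)}`; hence `p(z,w) = z^m - w^n` is not expansive on `𝕋`. -/
theorem stmt_7 (m n : ℕ) (hm : 1 ≤ m) (hn : 1 ≤ n) (hdvd : m ∣ n) :
    (∀ k : ℕ, (1 : ℂ) ∉ pathEndT m n k {z : ℂ | ‖z‖ = 1 ∧ z ^ m ≠ 1}) ∧
    ¬ (∀ U : Set ℂ, U ⊆ {z : ℂ | ‖z‖ = 1} → U.Nonempty →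
        (∃ V : Set ℂ, IsOpen V ∧ U = V ∩ {z : ℂ | ‖z‖ = 1}) →
        ∃ r : ℕ, pathEndT m n r U = {z : ℂ | ‖z‖ = 1}) := by
  have key : ∀ k : ℕ, (1 : ℂ) ∉ pathEndT m n k {z : ℂ | ‖z‖ = 1 ∧ z ^ m ≠ 1} := by
    intro k ⟨z, _, hrel, ⟨_, h0⟩, hlast⟩
    exact h0 (back_induct m n hdvd k z hrel (by rw [hlast, one_pow]))
  refine ⟨key, fun H => ?_⟩
  set U : Set ℂ := {z : ℂ | ‖z‖ = 1 ∧ z ^ m ≠ 1} with hU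
  have hsub : U ⊆ {z : ℂ | ‖z‖ = 1} := fun z hz => hz.1
  have hne : U.Nonempty := by
    refine ⟨Complex.exp ((Real.pi / m) * Complex.I), ?_, ?_⟩
    · show ‖_‖ = 1
      rw [Complex.norm_exp]
      simp
    · show Complex.exp _ ^ m ≠ 1
      rw [← Complex.exp_nat_mul]
      have : (m : ℂ) * ((Real.pi / m) * Complex.I) = Real.pi * Complex.I := by
        have hm0 : (m : ℂ) ≠ 0 := Nat.cast_ne_zero.mpr (by omega)
        field_simp
      rw [this, Complex.exp_pi_mul_I]
      norm_num
  have hopen : ∃ V : Set ℂ, IsOpen V ∧ U = V ∩ {z : ℂ | ‖z‖ = 1} := by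
    refine ⟨{z : ℂ | z ^ m ≠ 1}, ?_, ?_⟩
    · have : Continuous fun z : ℂ => z ^ m := continuous_pow m
      exact isOpen_compl_singleton.preimage this
    · ext z; simp [hU]; tauto
  obtain ⟨r, hr⟩ := H U hsub hne hopen
  have : (1 : ℂ) ∈ pathEndT m n r U := by
    rw [hr]; simp
  exact key r this
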